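/- arXiv:2505.23017 — 3 statements merged into one kernel-verified Lean document; each statement's English description precedes it below -/
import Mathlib

section
/- Let P̂ be an n×n real positive semidefinite matrix, R an m×m real positive semidefinite matrix, and H an m×n real matrix. Suppose the innovation covariance S = H P̂ Hᵀ + R is invertible, and define the Kalman gain K = P̂ Hᵀ S⁻¹. Then the standard-form updated covariance (I − K H) P̂ is positive semidefinite. -/
open Matrix

/-- The standard-form updated covariance `(I − K H) P̂`, with Kalman gain
`K = P̂ Hᵀ S⁻¹` and invertible `S = H P̂ Hᵀ + R`, is positive semidefinite
whenever `P̂` and `R` are. -/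
theorem standard_form_posSemidef
    (n m : ℕ) (Phat : Matrix (Fin n) (Fin n) ℝ)
    (H : Matrix (Fin m) (Fin n) ℝ) (R : Matrix (Fin m) (Fin m) ℝ)
    (hP : Phat.PosSemidef) (hR : R.PosSemidef)
    (hS : IsUnit (H * Phat * Hᵀ + R)) :
    ((1 - (Phat * Hᵀ * (H * Phat * Hᵀ + R)⁻¹) * H) * Phat).PosSemidef := by
  set S : Matrix (Fin m) (Fin m) ℝ := H * Phat * Hᵀ + R with hSdef
  set K : Matrix (Fin n) (Fin m) ℝ := Phat * Hᵀ * S⁻¹ with hKdef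
  have hPt : Phatᵀ = Phat := by
    have := hP.isHermitian
    simpa [Matrix.IsHermitian, Matrix.conjTranspose_eq_transpose_of_trivial] using this
  have hSpsd : S.PosSemidef := (hP.mul_mul_conjTranspose_same H).add hR
  have hSt : Sᵀ = S := by
    have := hSpsd.isHermitian
    simpa [Matrix.IsHermitian, Matrix.conjTranspose_eq_transpose_of_trivial] using this
  have hdet : IsUnit S.det := (Matrix.isUnit_iff_isUnit_det S).mp hS
  have hinvmul : S⁻¹ * S = 1 := Matrix.nonsing_inv_mul S hdet
  have hKSK : K * S * Kᵀ = Phat * Hᵀ * Kᵀ := by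
    rw [hKdef, Matrix.mul_assoc (Phat * Hᵀ) S⁻¹ S, hinvmul, Matrix.mul_one]
  have ht : (1 - K * H)ᵀ = 1 - Hᵀ * Kᵀ := by
    simp [Matrix.transpose_sub, Matrix.transpose_mul]
  have h3 : K * H * Phat * Hᵀ * Kᵀ + K * R * Kᵀ = Phat * Hᵀ * Kᵀ := by
    rw [← hKSK, hSdef]; simp [Matrix.mul_add, Matrix.add_mul, Matrix.mul_assoc]
  have key : (1 - K * H) * Phat
      = (1 - K * H) * Phat * (1 - K * H)ᵀ + K * R * Kᵀ := by
    rw [ht]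
    calc (1 - K * H) * Phat
        = Phat - K * H * Phat - Phat * Hᵀ * Kᵀ + Phat * Hᵀ * Kᵀ := by
          simp only [Matrix.sub_mul, Matrix.one_mul]; abel
      _ = Phat - K * H * Phat - Phat * Hᵀ * Kᵀ
            + (K * H * Phat * Hᵀ * Kᵀ + K * R * Kᵀ) := by rw [h3]
      _ = (1 - K * H) * Phat * (1 - Hᵀ * Kᵀ) + K * R * Kᵀ := by
          simp only [Matrix.sub_mul, Matrix.mul_sub, Matrix.one_mul, Matrix.mul_one, Matrix.mul_assoc]; abel
  rw [key]
  have h1 : ((1 - K * H) * Phat * (1 - K * H)ᵀ).PosSemidef := by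
    have := hP.mul_mul_conjTranspose_same (1 - K * H)
    simpa [Matrix.conjTranspose_eq_transpose_of_trivial] using this
  have h2 : (K * R * Kᵀ).PosSemidef := by
    have := hR.mul_mul_conjTranspose_same K
    simpa [Matrix.conjTranspose_eq_transpose_of_trivial] using this
  exact h1.add h2
end

section
/- Let P̂ be an n×n real positive definite matrix, R an m×m real positive definite matrix, and H an m×n real matrix. Then the innovation covariance S = H P̂ Hᵀ + R is positive definite (hence invertible), and with the Kalman gain K = P̂ Hᵀ S⁻¹, the standard-form updated covariance (I − K H) P̂ is positive definite. -/
open Matrix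

private lemma conj_transpose_eq_real {p q : ℕ} (A : Matrix (Fin p) (Fin q) ℝ) : Aᴴ = Aᵀ := by
  ext i j; simp [conjTranspose_apply]

private lemma quad_conj {p q : ℕ} (B : Matrix (Fin p) (Fin q) ℝ)
    (M : Matrix (Fin q) (Fin q) ℝ) (x : Fin p → ℝ) :
    star x ⬝ᵥ (B * M * Bᵀ) *ᵥ x = star (Bᵀ *ᵥ x) ⬝ᵥ M *ᵥ (Bᵀ *ᵥ x) := by
  simp only [star_trivial]
  rw [← mulVec_mulVec, ← mulVec_mulVec, dotProduct_mulVec, ← mulVec_transpose]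

/-- If `P̂` and `R` are positive definite, then the innovation covariance
`S = H P̂ Hᵀ + R` is positive definite, and with Kalman gain `K = P̂ Hᵀ S⁻¹`
the standard-form updated covariance `(I − K H) P̂` is positive definite. -/
theorem standard_form_posDef
    (n m : ℕ) (Phat : Matrix (Fin n) (Fin n) ℝ)
    (H : Matrix (Fin m) (Fin n) ℝ) (R : Matrix (Fin m) (Fin m) ℝ)
    (hP : Phat.PosDef) (hR : R.PosDef) :
    (H * Phat * Hᵀ + R).PosDef ∧
      ((1 - (Phat * Hᵀ * (H * Phat * Hᵀ + R)⁻¹) * H) * Phat).PosDef := by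
  set S : Matrix (Fin m) (Fin m) ℝ := H * Phat * Hᵀ + R with hSdef
  have hHPH : (H * Phat * Hᵀ).PosSemidef := by
    have := hP.posSemidef.mul_mul_conjTranspose_same H
    rwa [conj_transpose_eq_real] at this
  have hS : S.PosDef := Matrix.PosDef.posSemidef_add hHPH hR
  set K : Matrix (Fin n) (Fin m) ℝ := Phat * Hᵀ * S⁻¹ with hKdef
  refine ⟨hS, ?_⟩
  have hKS : K * S = Phat * Hᵀ := by
    rw [hKdef, Matrix.mul_assoc, nonsing_inv_mul S (isUnit_iff_ne_zero.mpr hS.det_pos.ne'), Matrix.mul_one]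
  have hSsub : H * Phat * Hᵀ = S - R := by
    rw [hSdef, add_sub_cancel_right]
  have h2 : (1 - K * H) * Phat * Hᵀ = K * R := by
    calc (1 - K * H) * Phat * Hᵀ
        = Phat * (Hᵀ) - K * (H * (Phat * Hᵀ)) := by
          simp only [Matrix.sub_mul, Matrix.one_mul, Matrix.mul_assoc]
      _ = Phat * Hᵀ - K * (S - R) := by rw [← Matrix.mul_assoc H Phat Hᵀ, hSsub]
      _ = Phat * Hᵀ - (K * S - K * R) := by rw [Matrix.mul_sub]
      _ = K * R := by rw [hKS, sub_sub_cancel]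
  have ht : (1 - K * H)ᵀ = 1 - Hᵀ * Kᵀ := by
    rw [transpose_sub, transpose_one, transpose_mul]
  have hcross : (1 - K * H) * Phat * (Hᵀ * Kᵀ) = K * R * Kᵀ := by
    rw [← Matrix.mul_assoc, h2]
  have hJoseph : (1 - K * H) * Phat =
      (1 - K * H) * Phat * (1 - K * H)ᵀ + K * R * Kᵀ := by
    rw [ht, Matrix.mul_sub, Matrix.mul_one, hcross]
    abel
  rw [hJoseph]
  have hA : ((1 - K * H) * Phat * (1 - K * H)ᵀ).PosSemidef := by
    have := hP.posSemidef.mul_mul_conjTranspose_same (1 - K * H)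
    rwa [conj_transpose_eq_real] at this
  have hB : (K * R * Kᵀ).PosSemidef := by
    have := hR.posSemidef.mul_mul_conjTranspose_same K
    rwa [conj_transpose_eq_real] at this
  refine Matrix.PosDef.of_dotProduct_mulVec_pos (hA.isHermitian.add hB.isHermitian) (fun x hx => ?_)
  rw [add_mulVec, dotProduct_add]
  rcases lt_or_eq_of_le (add_nonneg (hA.dotProduct_mulVec_nonneg x) (hB.dotProduct_mulVec_nonneg x)) with h | h
  · simpa using h
  exfalso
  have hA0 : star x ⬝ᵥ ((1 - K * H) * Phat * (1 - K * H)ᵀ) *ᵥ x = 0 :=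
    le_antisymm (by linarith [hA.dotProduct_mulVec_nonneg x, hB.dotProduct_mulVec_nonneg x]) (hA.dotProduct_mulVec_nonneg x)
  have hB0 : star x ⬝ᵥ (K * R * Kᵀ) *ᵥ x = 0 :=
    le_antisymm (by linarith [hA.dotProduct_mulVec_nonneg x, hB.dotProduct_mulVec_nonneg x]) (hB.dotProduct_mulVec_nonneg x)
  rw [quad_conj] at hA0 hB0
  have hAz : (1 - K * H)ᵀ *ᵥ x = 0 := by
    by_contra hne
    exact absurd hA0 (ne_of_gt (hP.dotProduct_mulVec_pos hne))
  have hBz : Kᵀ *ᵥ x = 0 := by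
    by_contra hne
    exact absurd hB0 (ne_of_gt (hR.dotProduct_mulVec_pos hne))
  apply hx
  rw [ht, sub_mulVec, one_mulVec, ← mulVec_mulVec, hBz, mulVec_zero, sub_zero] at hAz
  exact hAz
end

section
/- Let A, H, Q, R define a Kalman filter over ℝ: A an n×n state-transition matrix, H an m×n observation matrix, Q an n×n positive definite process-noise covariance, R an m×m positive definite observation-noise covariance, and P₀ an n×n positive definite initial covariance. Define recursively, for k ≥ 1: P̂ₖ = A Pₖ₋₁ Aᵀ + Q, Sₖ = H P̂ₖ Hᵀ + R, Kₖ = P̂ₖ Hᵀ Sₖ⁻¹, and Pₖ = (I − Kₖ H) P̂ₖ. Then for every k ≥ 0 the matrix Pₖ is positive definite. -/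
open Matrix

private lemma quad_form_eq {n m : ℕ} (C : Matrix (Fin n) (Fin m) ℝ)
    (M : Matrix (Fin m) (Fin m) ℝ) (x : Fin n → ℝ) :
    x ⬝ᵥ (C * M * Cᵀ) *ᵥ x = (Cᵀ *ᵥ x) ⬝ᵥ M *ᵥ (Cᵀ *ᵥ x) := by
  rw [← mulVec_mulVec, ← mulVec_mulVec, dotProduct_mulVec, mulVec_transpose]

/-- Joseph form: `(1 - K H) P (1 - K H)ᵀ + K R Kᵀ` is positive definite. -/
private lemma joseph_posDef {n m : ℕ}
    (Ph : Matrix (Fin n) (Fin n) ℝ) (R : Matrix (Fin m) (Fin m) ℝ)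
    (K : Matrix (Fin n) (Fin m) ℝ) (H : Matrix (Fin m) (Fin n) ℝ)
    (hPh : Ph.PosDef) (hR : R.PosDef) :
    ((1 - K * H) * Ph * (1 - K * H)ᵀ + K * R * Kᵀ).PosDef := by
  have h1 : ((1 - K * H) * Ph * (1 - K * H)ᵀ).PosSemidef := by
    have := hPh.posSemidef.mul_mul_conjTranspose_same (1 - K * H)
    rwa [conjTranspose_eq_transpose_of_trivial] at this
  have h2 : (K * R * Kᵀ).PosSemidef := by
    have := hR.posSemidef.mul_mul_conjTranspose_same K
    rwa [conjTranspose_eq_transpose_of_trivial] at this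
  refine Matrix.PosDef.of_dotProduct_mulVec_pos (h1.add h2).isHermitian fun x hx => ?_
  have hsx : star x = x := by simp
  rw [hsx, add_mulVec, dotProduct_add, quad_form_eq, quad_form_eq]
  by_cases hK : Kᵀ *ᵥ x = 0
  · have hC : (1 - K * H)ᵀ *ᵥ x = x := by
      rw [transpose_sub, transpose_one, transpose_mul, sub_mulVec, one_mulVec,
        ← mulVec_mulVec, hK, mulVec_zero, sub_zero]
    rw [hC, hK]
    have := hPh.dotProduct_mulVec_pos hx
    rw [hsx] at this
    simpa using this
  · have ht1 : 0 ≤ ((1 - K * H)ᵀ *ᵥ x) ⬝ᵥ Ph *ᵥ ((1 - K * H)ᵀ *ᵥ x) := by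
      have := hPh.posSemidef.dotProduct_mulVec_nonneg ((1 - K * H)ᵀ *ᵥ x)
      simpa using this
    have ht2 : 0 < (Kᵀ *ᵥ x) ⬝ᵥ R *ᵥ (Kᵀ *ᵥ x) := by
      have := hR.dotProduct_mulVec_pos hK
      simpa using this
    linarith

/-- One step of the Kalman covariance recursion preserves positive
definiteness. -/
private lemma step_posDef {n m : ℕ}
    (Ph : Matrix (Fin n) (Fin n) ℝ) (H : Matrix (Fin m) (Fin n) ℝ)
    (R S : Matrix (Fin m) (Fin m) ℝ) (K : Matrix (Fin n) (Fin m) ℝ)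
    (hPh : Ph.PosDef) (hR : R.PosDef)
    (hSeq : S = H * Ph * Hᵀ + R) (hKeq : K = Ph * Hᵀ * S⁻¹) :
    ((1 - K * H) * Ph).PosDef := by
  have hS : S.PosDef := by
    rw [hSeq]
    refine Matrix.PosDef.posSemidef_add ?_ hR
    have := hPh.posSemidef.mul_mul_conjTranspose_same H
    rwa [conjTranspose_eq_transpose_of_trivial] at this
  have hSinv : S⁻¹ * S = 1 := Matrix.nonsing_inv_mul S hS.det_pos.ne'.isUnit
  have hKS : K * S = Ph * Hᵀ := by
    rw [hKeq, Matrix.mul_assoc, hSinv, Matrix.mul_one]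
  have e1 : H * Ph * Hᵀ = S - R := by rw [hSeq, add_sub_cancel_right]
  have key : (1 - K * H) * Ph * Hᵀ = K * R := by
    rw [sub_mul, Matrix.sub_mul, Matrix.one_mul, Matrix.mul_assoc (K * H) Ph Hᵀ,
      Matrix.mul_assoc K H (Ph * Hᵀ), ← Matrix.mul_assoc H Ph Hᵀ, e1,
      Matrix.mul_sub, hKS, sub_sub_cancel]
  have joseph : (1 - K * H) * Ph
      = (1 - K * H) * Ph * (1 - K * H)ᵀ + K * R * Kᵀ := by
    have hCt : (1 - K * H)ᵀ = 1 - Hᵀ * Kᵀ := by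
      rw [transpose_sub, transpose_one, transpose_mul]
    rw [hCt, Matrix.mul_sub, Matrix.mul_one,
      ← Matrix.mul_assoc ((1 - K * H) * Ph) Hᵀ Kᵀ, key, sub_add_cancel]
  rw [joseph]
  exact joseph_posDef Ph R K H hPh hR

/-- Positive definiteness is preserved along the whole Kalman-filter
covariance recursion: with `Q`, `R` and `P₀` positive definite, every `Pₖ`
is positive definite. -/
theorem kalman_recursion_posDef
    (n m : ℕ) (A Q P₀ : Matrix (Fin n) (Fin n) ℝ)
    (H : Matrix (Fin m) (Fin n) ℝ) (R : Matrix (Fin m) (Fin m) ℝ)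
    (hQ : Q.PosDef) (hR : R.PosDef) (hP₀ : P₀.PosDef)
    (P : ℕ → Matrix (Fin n) (Fin n) ℝ)
    (hP0 : P 0 = P₀)
    (hPrec : ∀ k : ℕ, P (k + 1) =
      (1 - ((A * P k * Aᵀ + Q) * Hᵀ * (H * (A * P k * Aᵀ + Q) * Hᵀ + R)⁻¹) * H) *
        (A * P k * Aᵀ + Q)) :
    ∀ k : ℕ, (P k).PosDef := by
  intro k
  induction k with
  | zero => rw [hP0]; exact hP₀
  | succ k ih =>
    have hPh : (A * P k * Aᵀ + Q).PosDef := by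
      refine Matrix.PosDef.posSemidef_add ?_ hQ
      have := ih.posSemidef.mul_mul_conjTranspose_same A
      rwa [conjTranspose_eq_transpose_of_trivial] at this
    rw [hPrec k]
    exact step_posDef (A * P k * Aᵀ + Q) H R _ _ hPh hR rfl rfl
end
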